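/- Let f, g ∈ E_{(beta,mu)} with beta > 0 and mu > 1, and let psi(m) = (2π)^{−1/2} (f ∗ g)(m) = (2π)^{−1/2} ∫_ℝ f(m − m1) g(m1) dm1 be their convolution. Then psi ∈ E_{(beta,mu)} and F^{-1}(f)(z) · F^{-1}(g)(z) = F^{-1}(psi)(z) for all z in the strip H_beta = {z ∈ ℂ : |Im(z)| < beta}. -/

import Mathlib

/-!
The weight is almost submultiplicative: `eW (a + b) ≤ 2 ^ μ (eW a e^{β|b|} + e^{β|a|} eW b)`,
by Peetre's inequality for the polynomial factor and `|a + b| ≤ |a| + |b|` for the exponential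
one. Since `e^{β|x|} |f x| ≤ Bf (1 + |x|)^{-μ}` is integrable for `μ > 1`, this bounds
`eW · (f ∗ g)`. On the strip, `f e^{iz·}` and `g e^{iz·}` are integrable and
`(f e^{iz·}) ∗ (g e^{iz·}) = (f ∗ g) e^{iz·}`, so the product formula is Fubini for a
convolution.
-/

open MeasureTheory

noncomputable def eW (beta mu m : ℝ) : ℝ := (1 + |m|) ^ mu * Real.exp (beta * |m|)

/-- The inverse Fourier transform, extended to complex arguments. -/
noncomputable def invFourier (f : ℝ → ℂ) (z : ℂ) : ℂ :=
  (1 / Real.sqrt (2 * Real.pi) : ℝ) • ∫ m : ℝ, f m * Complex.exp (Complex.I * z * m)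

/-- The horizontal strip `H_beta`. -/
def hStrip (beta : ℝ) : Set ℂ := {z : ℂ | |z.im| < beta}

open scoped Convolution

lemma eW_nonneg (beta mu m : ℝ) : 0 ≤ eW beta mu m := by
  unfold eW; positivity

lemma one_le_eW {beta mu : ℝ} (hbeta : 0 ≤ beta) (hmu : 0 ≤ mu) (m : ℝ) :
    1 ≤ eW beta mu m :=
  one_le_mul_of_one_le_of_one_le (Real.one_le_rpow (by simp) hmu)
    (Real.one_le_exp (by positivity))

lemma one_add_abs_add_rpow_le {mu : ℝ} (hmu : 0 ≤ mu) (a b : ℝ) :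
    (1 + |a + b|) ^ mu ≤ 2 ^ mu * ((1 + |a|) ^ mu + (1 + |b|) ^ mu) := by
  have hsum : 1 + |a + b| ≤ 2 * max (1 + |a|) (1 + |b|) := by
    linarith [abs_add_le a b, le_max_left (1 + |a|) (1 + |b|), le_max_right (1 + |a|) (1 + |b|)]
  calc (1 + |a + b|) ^ mu ≤ (2 * max (1 + |a|) (1 + |b|)) ^ mu := by gcongr
    _ = 2 ^ mu * max ((1 + |a|) ^ mu) ((1 + |b|) ^ mu) := by
      rw [Real.mul_rpow zero_le_two (by positivity),
        Real.rpow_max (by positivity) (by positivity) hmu]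
    _ ≤ 2 ^ mu * ((1 + |a|) ^ mu + (1 + |b|) ^ mu) := by
      gcongr; exact max_le_add_of_nonneg (by positivity) (by positivity)

lemma eW_add_le {beta mu : ℝ} (hbeta : 0 ≤ beta) (hmu : 0 ≤ mu) (a b : ℝ) :
    eW beta mu (a + b) ≤
      2 ^ mu * (eW beta mu a * Real.exp (beta * |b|) + Real.exp (beta * |a|) * eW beta mu b) := by
  have hexp : Real.exp (beta * |a + b|) ≤ Real.exp (beta * |a|) * Real.exp (beta * |b|) := by
    rw [← Real.exp_add, ← mul_add]; gcongr; exact abs_add_le a b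
  calc eW beta mu (a + b)
      ≤ 2 ^ mu * ((1 + |a|) ^ mu + (1 + |b|) ^ mu) *
          (Real.exp (beta * |a|) * Real.exp (beta * |b|)) := by
        unfold eW; gcongr; exact one_add_abs_add_rpow_le hmu a b
    _ = _ := by unfold eW; ring

lemma exp_mul_norm_le_of_eW_mul_norm_le {E : Type*} [NormedAddCommGroup E] {beta mu B x : ℝ}
    {v : E} (h : eW beta mu x * ‖v‖ ≤ B) :
    Real.exp (beta * |x|) * ‖v‖ ≤ B * (1 + |x|) ^ (-mu) := by
  have hpos : 0 < (1 + |x|) ^ mu := by positivity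
  rw [Real.rpow_neg (by positivity), ← div_eq_mul_inv, le_div_iff₀ hpos]
  calc Real.exp (beta * |x|) * ‖v‖ * (1 + |x|) ^ mu = eW beta mu x * ‖v‖ := by
        unfold eW; ring
    _ ≤ B := h

lemma norm_mul_cexp_le {beta mu B : ℝ} {f : ℝ → ℂ}
    (hB : ∀ m, eW beta mu m * ‖f m‖ ≤ B)
    {z : ℂ} (hz : |z.im| ≤ beta) (m : ℝ) :
    ‖f m * Complex.exp (Complex.I * z * m)‖ ≤ B * (1 + |m|) ^ (-mu) := by
  have hre : (Complex.I * z * m).re = -(z.im * m) := by simp [Complex.mul_re]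
  calc ‖f m * Complex.exp (Complex.I * z * m)‖ = Real.exp (-(z.im * m)) * ‖f m‖ := by
        rw [norm_mul, Complex.norm_exp, hre, mul_comm]
    _ ≤ Real.exp (beta * |m|) * ‖f m‖ := by
        gcongr
        calc -(z.im * m) ≤ |z.im * m| := neg_le_abs _
          _ = |z.im| * |m| := abs_mul _ _
          _ ≤ beta * |m| := by gcongr
    _ ≤ B * (1 + |m|) ^ (-mu) := exp_mul_norm_le_of_eW_mul_norm_le (hB m)

lemma integrable_one_add_abs_rpow_neg {mu : ℝ} (hmu : 1 < mu) :
    Integrable fun t : ℝ => (1 + |t|) ^ (-mu) := by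
  simpa using integrable_one_add_norm (E := ℝ) (μ := volume) (r := mu) (by simpa using hmu)

lemma integrable_mul_cexp {beta mu B : ℝ} (hmu : 1 < mu) {f : ℝ → ℂ}
    (hf : AEStronglyMeasurable f) (hB : ∀ m, eW beta mu m * ‖f m‖ ≤ B) {z : ℂ}
    (hz : |z.im| ≤ beta) :
    Integrable fun m : ℝ => f m * Complex.exp (Complex.I * z * m) :=
  ((integrable_one_add_abs_rpow_neg hmu).const_mul B).mono'
    (hf.mul (Continuous.aestronglyMeasurable (by fun_prop)))
    (ae_of_all _ (norm_mul_cexp_le hB hz))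

lemma integrable_of_eW_mul_norm_le {beta mu B : ℝ} (hbeta : 0 ≤ beta) (hmu : 1 < mu)
    {f : ℝ → ℂ} (hf : AEStronglyMeasurable f) (hB : ∀ m, eW beta mu m * ‖f m‖ ≤ B) :
    Integrable f := by
  simpa using integrable_mul_cexp hmu hf hB (z := 0) (by simpa using hbeta)

lemma eW_mul_norm_integral_le {beta mu Bf Bg : ℝ} (hbeta : 0 ≤ beta) (hmu : 1 < mu)
    {f g : ℝ → ℂ} (hBf : ∀ m, eW beta mu m * ‖f m‖ ≤ Bf)
    (hBg : ∀ m, eW beta mu m * ‖g m‖ ≤ Bg) (m : ℝ) :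
    eW beta mu m * ‖∫ t, f (m - t) * g t‖ ≤
      2 ^ mu * Bf * Bg * (2 * ∫ t : ℝ, (1 + |t|) ^ (-mu)) := by
  set w : ℝ → ℝ := fun t => (1 + |t|) ^ (-mu)
  have hw : Integrable w := integrable_one_add_abs_rpow_neg hmu
  have hBf0 : 0 ≤ Bf := (mul_nonneg (eW_nonneg _ _ _) (norm_nonneg _)).trans (hBf 0)
  have hpointwise : ∀ t,
      eW beta mu m * ‖f (m - t) * g t‖ ≤ 2 ^ mu * Bf * Bg * (w t + w (m - t)) := by
    intro t
    calc eW beta mu m * ‖f (m - t) * g t‖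
        = eW beta mu (m - t + t) * (‖f (m - t)‖ * ‖g t‖) := by
          rw [sub_add_cancel, norm_mul]
      _ ≤ 2 ^ mu * (eW beta mu (m - t) * Real.exp (beta * |t|)
            + Real.exp (beta * |m - t|) * eW beta mu t) * (‖f (m - t)‖ * ‖g t‖) := by
          gcongr; exact eW_add_le hbeta (by linarith) _ _
      _ = 2 ^ mu * ((eW beta mu (m - t) * ‖f (m - t)‖) * (Real.exp (beta * |t|) * ‖g t‖)
            + (Real.exp (beta * |m - t|) * ‖f (m - t)‖) * (eW beta mu t * ‖g t‖)) := by ring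
      _ ≤ 2 ^ mu * (Bf * (Bg * w t) + (Bf * w (m - t)) * Bg) := by
          gcongr 2 ^ mu * (?_ + ?_)
          · exact mul_le_mul (hBf _) (exp_mul_norm_le_of_eW_mul_norm_le (hBg t))
              (by positivity) hBf0
          · exact mul_le_mul (exp_mul_norm_le_of_eW_mul_norm_le (hBf _)) (hBg t)
              (mul_nonneg (eW_nonneg _ _ _) (norm_nonneg _)) (by positivity)
      _ = 2 ^ mu * Bf * Bg * (w t + w (m - t)) := by ring
  calc eW beta mu m * ‖∫ t, f (m - t) * g t‖
      ≤ eW beta mu m * ∫ t, ‖f (m - t) * g t‖ := by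
        gcongr; exacts [eW_nonneg _ _ _, norm_integral_le_integral_norm _]
    _ = ∫ t, eW beta mu m * ‖f (m - t) * g t‖ := (integral_const_mul _ _).symm
    _ ≤ ∫ t, 2 ^ mu * Bf * Bg * (w t + w (m - t)) :=
        integral_mono_of_nonneg (ae_of_all _ fun t => mul_nonneg (eW_nonneg _ _ _) (norm_nonneg _))
          ((hw.add (hw.comp_sub_left m)).const_mul _) (ae_of_all _ hpointwise)
    _ = 2 ^ mu * Bf * Bg * (2 * ∫ t, w t) := by
        rw [integral_const_mul, integral_add hw (hw.comp_sub_left m),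
          integral_sub_left_eq_self w volume m]
        ring

lemma convolution_mul_cexp (f g : ℝ → ℂ) (c : ℂ) (m : ℝ) :
    ((fun x : ℝ => f x * Complex.exp (c * x)) ⋆[ContinuousLinearMap.mul ℂ ℂ]
        fun x : ℝ => g x * Complex.exp (c * x)) m
      = (f ⋆[ContinuousLinearMap.mul ℂ ℂ] g) m * Complex.exp (c * m) := by
  simp only [convolution_mul, ← integral_mul_const]
  congr 1 with t
  have hexp : Complex.exp (c * m) = Complex.exp (c * t) * Complex.exp (c * (m - t : ℝ)) := by
    rw [← Complex.exp_add]; push_cast; ring_nf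
  rw [hexp]; ring

lemma integral_convolution_mul_cexp {f g : ℝ → ℂ} {c : ℂ}
    (hf : Integrable fun x : ℝ => f x * Complex.exp (c * x))
    (hg : Integrable fun x : ℝ => g x * Complex.exp (c * x)) :
    ∫ m, (f ⋆[ContinuousLinearMap.mul ℂ ℂ] g) m * Complex.exp (c * m)
      = (∫ x, f x * Complex.exp (c * x)) * ∫ x, g x * Complex.exp (c * x) := by
  simp_rw [← convolution_mul_cexp]
  exact integral_convolution _ hf hg

theorem stmt_9 (beta mu : ℝ) (hbeta : 0 < beta) (hmu : 1 < mu)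
    (f g : ℝ → ℂ) (hf : Continuous f) (hg : Continuous g)
    (Bf Bg : ℝ) (hBf : ∀ m : ℝ, eW beta mu m * ‖f m‖ ≤ Bf)
    (hBg : ∀ m : ℝ, eW beta mu m * ‖g m‖ ≤ Bg) :
    Continuous (fun m : ℝ =>
      (1 / Real.sqrt (2 * Real.pi) : ℝ) • ∫ m1 : ℝ, f (m - m1) * g m1) ∧
    (∃ B : ℝ, ∀ m : ℝ,
      eW beta mu m * ‖(1 / Real.sqrt (2 * Real.pi) : ℝ) • ∫ m1 : ℝ, f (m - m1) * g m1‖ ≤ B) ∧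
    ∀ z ∈ hStrip beta,
      invFourier f z * invFourier g z
        = invFourier (fun m => (1 / Real.sqrt (2 * Real.pi) : ℝ) • ∫ m1 : ℝ, f (m - m1) * g m1) z := by
  simp only [← convolution_mul_swap]
  have hf_bdd : BddAbove (Set.range fun m => ‖f m‖) := ⟨Bf, by
    rintro _ ⟨m, rfl⟩
    exact (le_mul_of_one_le_left (norm_nonneg _) (one_le_eW hbeta.le (by linarith) m)).trans
      (hBf m)⟩
  refine ⟨?_, ⟨(1 / Real.sqrt (2 * Real.pi)) *
    (2 ^ mu * Bf * Bg * (2 * ∫ t : ℝ, (1 + |t|) ^ (-mu))), fun m => ?_⟩, fun z hz => ?_⟩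
  · exact (hf_bdd.continuous_convolution_left_of_integrable
      (L := ContinuousLinearMap.mul ℂ ℂ) hf
      (integrable_of_eW_mul_norm_le hbeta.le hmu hg.aestronglyMeasurable hBg)).const_smul
      (1 / Real.sqrt (2 * Real.pi) : ℝ)
  · rw [norm_smul, Real.norm_eq_abs, abs_of_nonneg (by positivity), mul_left_comm,
      convolution_mul_swap]
    exact mul_le_mul_of_nonneg_left (eW_mul_norm_integral_le hbeta.le hmu hBf hBg m) (by positivity)
  · have hz' : |z.im| ≤ beta := le_of_lt hz
    simp only [invFourier, smul_mul_assoc, mul_smul_comm, integral_smul, smul_smul]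
    rw [integral_convolution_mul_cexp (integrable_mul_cexp hmu hf.aestronglyMeasurable hBf hz')
      (integrable_mul_cexp hmu hg.aestronglyMeasurable hBg hz')]
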